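/- For every n ≥ 1 and every z in the closed unit disk, |V_n(z) - √(1-z)| ≤ (2/√(πn))·|z|^{n+1}; consequently V_n converges uniformly on the closed unit disk to √(1-z). -/

import Mathlib

noncomputable def Vc (z : ℂ) : ℕ → ℂ
  | 0 => 1
  | n + 1 => (1 - z + Vc z n) / (1 + Vc z n)

/-! Let `w = √(1 - z)`, so `Re w > 0`, and let `ρ = (1 - w) / (1 + w)` be its Cayley transform,
so `|ρ| < 1`. The recursion is solved by `V_n = w (1 + ρ^(n+1)) / (1 - ρ^(n+1))`, hence
`V_n - w = 2 w ρ^(n+1) / (1 - ρ^(n+1))`, while `z = 1 - w² = ρ (1 + w)²`. Writing `t = |ρ|`,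
`p = |1 + w|²` and `a = Re w`, the bound reduces to `|w| √(π n) ≤ (1 - t^(n+1)) p^(n+1)`.
Since `Re w² = 1 - Re z ≥ 0` gives `|w|² ≤ 2a²`, and `π ≤ 4`, it suffices that
`8 a² n ≤ ((1 - t^(n+1)) p^(n+1))²`; this follows from Bernoulli's inequality, applied to
`p ≥ (1 + a)²` when `n a²` is large and to `t p = |z| ≥ 1 - a²` when `n a²` is small.
At `z = 1` one has `V_n = 1 / (n + 1)` directly. -/

open Complex Filter Topology Finset

lemma succ_mul_pow_mul_one_sub_le_one_sub_pow {R : Type*} [CommRing R] [LinearOrder R]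
    [IsStrictOrderedRing R] {t : R} (ht0 : 0 ≤ t) (ht1 : t ≤ 1) (n : ℕ) :
    (n + 1) * t ^ n * (1 - t) ≤ 1 - t ^ (n + 1) := by
  rw [← geom_sum_mul_neg]
  gcongr ?_ * _
  simpa using card_nsmul_le_sum (range (n + 1)) (t ^ ·) (t ^ n) fun i hi =>
      pow_le_pow_of_le_one ht0 ht1 (Nat.lt_succ_iff.1 (mem_range.1 hi))

section RealEstimate

variable {a t p : ℝ}

lemma four_mul_pow_le (ht0 : 0 ≤ t) (ht1 : t ≤ 1) (hp0 : 0 ≤ p)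
    (hp : (1 - t ^ 2) * p = 4 * a) {n : ℕ} (hn : 1 ≤ n) :
    4 * a * p ^ n ≤ (1 - t ^ (n + 1)) * p ^ (n + 1) := by
  calc 4 * a * p ^ n = (1 - t ^ 2) * p ^ (n + 1) := by rw [← hp]; ring
    _ ≤ (1 - t ^ (n + 1)) * p ^ (n + 1) := by
      gcongr ?_ * _
      exact sub_le_sub_left (pow_le_pow_of_le_one ht0 ht1 (by omega)) 1

lemma two_mul_succ_mul_pow_le (ht0 : 0 ≤ t) (ht1 : t ≤ 1) (hp0 : 0 ≤ p)
    (hp : (1 - t ^ 2) * p = 4 * a) (n : ℕ) :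
    2 * a * (n + 1) * (t * p) ^ n ≤ (1 - t ^ (n + 1)) * p ^ (n + 1) := by
  have h2a : 2 * a ≤ (1 - t) * p := by
    nlinarith [mul_nonneg (mul_nonneg (sub_nonneg.2 ht1) hp0) (sub_nonneg.2 ht1)]
  calc 2 * a * (n + 1) * (t * p) ^ n ≤ (1 - t) * p * (n + 1) * (t * p) ^ n := by gcongr
    _ = ((n + 1) * t ^ n * (1 - t)) * p ^ (n + 1) := by ring
    _ ≤ (1 - t ^ (n + 1)) * p ^ (n + 1) := by
      gcongr
      exact succ_mul_pow_mul_one_sub_le_one_sub_pow ht0 ht1 n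

lemma eight_mul_sq_mul_le_sq (ha : 0 < a) (ht0 : 0 ≤ t) (ht1 : t ≤ 1)
    (hp : (1 - t ^ 2) * p = 4 * a) (hpa : (1 + a) ^ 2 ≤ p) (htp : 1 - a ^ 2 ≤ t * p)
    {n : ℕ} (hn : 1 ≤ n) :
    8 * a ^ 2 * n ≤ ((1 - t ^ (n + 1)) * p ^ (n + 1)) ^ 2 := by
  have hp0 : 0 ≤ p := (sq_nonneg _).trans hpa
  have hn' : (1 : ℝ) ≤ n := by exact_mod_cast hn
  rcases le_total 1 (4 * n * a ^ 2) with hlarge | hsmall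
  · have hbern : 1 + 2 * n * a ≤ p ^ n := calc
      1 + 2 * n * a ≤ 1 + n * (2 * a + a ^ 2) := by nlinarith
      _ ≤ (1 + (2 * a + a ^ 2)) ^ n := one_add_mul_le_pow (by nlinarith) n
      _ = ((1 + a) ^ 2) ^ n := by ring
      _ ≤ p ^ n := by gcongr
    have hlow : 8 * n * a ^ 2 ≤ (1 - t ^ (n + 1)) * p ^ (n + 1) := calc
      8 * n * a ^ 2 ≤ 4 * a * (1 + 2 * n * a) := by nlinarith
      _ ≤ 4 * a * p ^ n := by gcongr
      _ ≤ _ := four_mul_pow_le ht0 ht1 hp0 hp hn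
    nlinarith [mul_self_le_mul_self (by positivity) hlow]
  · have hbern : 3 / 4 ≤ (t * p) ^ n := calc
      (3 : ℝ) / 4 ≤ 1 + n * (-a ^ 2) := by nlinarith
      _ ≤ (1 + -a ^ 2) ^ n := one_add_mul_le_pow (by nlinarith) n
      _ ≤ (t * p) ^ n := by gcongr <;> nlinarith
    have hlow : 3 / 2 * a * (n + 1) ≤ (1 - t ^ (n + 1)) * p ^ (n + 1) := calc
      3 / 2 * a * (n + 1) ≤ 2 * a * (n + 1) * (t * p) ^ n := by
        nlinarith [mul_le_mul_of_nonneg_left hbern (by positivity : (0 : ℝ) ≤ 2 * a * (n + 1))]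
      _ ≤ _ := two_mul_succ_mul_pow_le ht0 ht1 hp0 hp n
    nlinarith [mul_self_le_mul_self (by positivity) hlow, sq_nonneg ((n : ℝ) - 1)]

end RealEstimate

noncomputable def cayley (w : ℂ) : ℂ := (1 - w) / (1 + w)

section Cayley

variable {w z : ℂ}

lemma norm_one_add_sq_sub_norm_one_sub_sq (w : ℂ) :
    ‖1 + w‖ ^ 2 - ‖1 - w‖ ^ 2 = 4 * w.re := by
  simp only [Complex.sq_norm, normSq_apply, add_re, add_im, sub_re, sub_im, one_re, one_im]
  ring

lemma one_add_ne_zero_of_re_pos (hw : 0 < w.re) : 1 + w ≠ 0 := by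
  intro h
  have := congrArg re h
  simp only [add_re, one_re, zero_re] at this
  linarith

lemma cayley_mul_one_add (hw : 0 < w.re) : cayley w * (1 + w) = 1 - w :=
  div_mul_cancel₀ _ (one_add_ne_zero_of_re_pos hw)

lemma norm_cayley_lt_one (hw : 0 < w.re) : ‖cayley w‖ < 1 := by
  rw [cayley, norm_div, div_lt_one (norm_pos_iff.2 (one_add_ne_zero_of_re_pos hw))]
  have := norm_one_add_sq_sub_norm_one_sub_sq w
  exact lt_of_pow_lt_pow_left₀ 2 (norm_nonneg _) (by linarith)

lemma one_sub_cayley_pow_ne_zero (hw : 0 < w.re) (n : ℕ) : 1 - cayley w ^ (n + 1) ≠ 0 := by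
  refine sub_ne_zero.2 fun h => ?_
  have := pow_lt_one₀ (norm_nonneg _) (norm_cayley_lt_one hw) n.succ_ne_zero
  rw [← norm_pow, ← h, norm_one] at this
  exact lt_irrefl _ this

lemma Vc_eq_cayley (hsq : w ^ 2 = 1 - z) (hw : 0 < w.re) (m : ℕ) :
    Vc z m = w * (1 + cayley w ^ (m + 1)) / (1 - cayley w ^ (m + 1)) := by
  have hρ := cayley_mul_one_add hw
  have h1w := one_add_ne_zero_of_re_pos hw
  induction m with
  | zero =>
    rw [Vc, eq_div_iff (one_sub_cayley_pow_ne_zero hw 0)]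
    linear_combination -hρ
  | succ m ih =>
    have hm := one_sub_cayley_pow_ne_zero hw m
    have hm1 := one_sub_cayley_pow_ne_zero hw (m + 1)
    have hden : 1 + Vc z m = (1 + w) * (1 - cayley w ^ (m + 2)) / (1 - cayley w ^ (m + 1)) := by
      rw [ih]
      field_simp
      linear_combination cayley w ^ (m + 1) * hρ
    rw [Vc, hden, ih, ← hsq]
    field_simp
    linear_combination (- (w * cayley w ^ (m + 1))) * hρ

lemma Vc_sub_eq_cayley (hsq : w ^ 2 = 1 - z) (hw : 0 < w.re) (n : ℕ) :
    Vc z n - w = 2 * w * cayley w ^ (n + 1) / (1 - cayley w ^ (n + 1)) := by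
  have := one_sub_cayley_pow_ne_zero hw n
  rw [Vc_eq_cayley hsq hw]
  field_simp
  ring

lemma eq_cayley_mul_one_add_sq (hsq : w ^ 2 = 1 - z) (hw : 0 < w.re) :
    z = cayley w * (1 + w) ^ 2 := by
  rw [sq (1 + w), ← mul_assoc, cayley_mul_one_add hw]
  linear_combination hsq

lemma norm_mul_sqrt_pi_mul_le (hsq : w ^ 2 = 1 - z) (hw : 0 < w.re) (hz : z.re ≤ 1)
    {n : ℕ} (hn : 1 ≤ n) :
    ‖w‖ * √(Real.pi * n) ≤ (1 - ‖cayley w‖ ^ (n + 1)) * (‖1 + w‖ ^ 2) ^ (n + 1) := by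
  set t := ‖cayley w‖
  set p := ‖1 + w‖ ^ 2
  have ht1 : t < 1 := norm_cayley_lt_one hw
  have hre : z.re = 1 - w.re ^ 2 + w.im ^ 2 := by
    rw [show z = 1 - w ^ 2 by rw [hsq]; ring]
    simp only [sub_re, one_re, sq, mul_re]
    ring
  have hp : (1 - t ^ 2) * p = 4 * w.re := by
    rw [← norm_one_add_sq_sub_norm_one_sub_sq, ← cayley_mul_one_add hw, norm_mul]
    ring
  have hpa : (1 + w.re) ^ 2 ≤ p := by
    simp only [p, Complex.sq_norm, normSq_apply, add_re, add_im, one_re, one_im]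
    nlinarith [sq_nonneg w.im]
  have htp : 1 - w.re ^ 2 ≤ t * p := by
    have : ‖z‖ = t * p := by rw [eq_cayley_mul_one_add_sq hsq hw, norm_mul, norm_pow]
    nlinarith [re_le_norm z, sq_nonneg w.im]
  have hw2 : ‖w‖ ^ 2 ≤ 2 * w.re ^ 2 := by
    rw [Complex.sq_norm, normSq_apply]
    nlinarith
  have hrhs : 0 ≤ (1 - t ^ (n + 1)) * p ^ (n + 1) :=
    mul_nonneg (sub_nonneg.2 (pow_le_one₀ (norm_nonneg _) ht1.le)) (by positivity)
  refine le_of_pow_le_pow_left₀ two_ne_zero hrhs ?_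
  calc (‖w‖ * √(Real.pi * n)) ^ 2 = ‖w‖ ^ 2 * Real.pi * n := by
        rw [mul_pow, Real.sq_sqrt (by positivity)]; ring
    _ ≤ 2 * w.re ^ 2 * 4 * n := by gcongr; exact Real.pi_le_four
    _ = 8 * w.re ^ 2 * n := by ring
    _ ≤ ((1 - t ^ (n + 1)) * p ^ (n + 1)) ^ 2 :=
      eight_mul_sq_mul_le_sq hw (norm_nonneg _) ht1.le hp hpa htp hn

lemma norm_Vc_sub_le (hsq : w ^ 2 = 1 - z) (hw : 0 < w.re) (hz : z.re ≤ 1)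
    {n : ℕ} (hn : 1 ≤ n) :
    ‖Vc z n - w‖ ≤ 2 / √(Real.pi * n) * ‖z‖ ^ (n + 1) := by
  set t := ‖cayley w‖
  set p := ‖1 + w‖ ^ 2
  have hpi : 0 < √(Real.pi * n) := Real.sqrt_pos.2 (by positivity)
  have hgap : 0 < 1 - t ^ (n + 1) := sub_pos.2 (pow_lt_one₀ (norm_nonneg _)
    (norm_cayley_lt_one hw) n.succ_ne_zero)
  have hden : 1 - t ^ (n + 1) ≤ ‖1 - cayley w ^ (n + 1)‖ := by
    simpa only [norm_one, norm_pow] using norm_sub_norm_le (1 : ℂ) (cayley w ^ (n + 1))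
  have hwle : ‖w‖ ≤ (1 - t ^ (n + 1)) * p ^ (n + 1) / √(Real.pi * n) :=
    (le_div_iff₀ hpi).2 (norm_mul_sqrt_pi_mul_le hsq hw hz hn)
  have hz' : ‖z‖ = t * p := by rw [eq_cayley_mul_one_add_sq hsq hw, norm_mul, norm_pow]
  calc ‖Vc z n - w‖ = 2 * ‖w‖ * t ^ (n + 1) / ‖1 - cayley w ^ (n + 1)‖ := by
        rw [Vc_sub_eq_cayley hsq hw, norm_div, norm_mul, norm_mul, norm_pow, RCLike.norm_ofNat]
    _ ≤ 2 * ‖w‖ * t ^ (n + 1) / (1 - t ^ (n + 1)) := by gcongr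
    _ ≤ 2 * ((1 - t ^ (n + 1)) * p ^ (n + 1) / √(Real.pi * n)) * t ^ (n + 1) /
          (1 - t ^ (n + 1)) := by gcongr
    _ = 2 / √(Real.pi * n) * ‖z‖ ^ (n + 1) := by
        rw [hz']
        field_simp
        ring

end Cayley

lemma Vc_one (n : ℕ) : Vc 1 n = ((n : ℂ) + 1)⁻¹ := by
  induction n with
  | zero => simp [Vc]
  | succ n ih =>
    rw [Vc, ih, sub_self, zero_add, Nat.cast_succ]
    have : (n : ℂ) + 1 ≠ 0 := n.cast_add_one_ne_zero
    field_simp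

lemma inv_add_one_le_two_div_sqrt_pi_mul {n : ℕ} (hn : 1 ≤ n) :
    ((n : ℝ) + 1)⁻¹ ≤ 2 / √(Real.pi * n) := by
  have hpi : 0 < √(Real.pi * n) := Real.sqrt_pos.2 (by positivity)
  rw [inv_eq_one_div, div_le_div_iff₀ (by positivity) hpi, one_mul,
    Real.sqrt_le_iff]
  constructor
  · positivity
  · nlinarith [Real.pi_le_four, Real.pi_pos, sq_nonneg (n : ℝ)]

lemma re_cpow_inv_two_pos {x : ℂ} (hx : x ≠ 0) (hre : 0 ≤ x.re) : 0 < (x ^ (2⁻¹ : ℂ)).re := by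
  rw [cpow_inv_two_re]
  exact Real.sqrt_pos.2 (by linarith [norm_pos_iff.2 hx])

lemma norm_Vc_sub_cpow_le {n : ℕ} (hn : 1 ≤ n) {z : ℂ} (hz : ‖z‖ ≤ 1) :
    ‖Vc z n - (1 - z) ^ ((1 : ℂ) / 2)‖ ≤ 2 / √(Real.pi * n) * ‖z‖ ^ (n + 1) := by
  have hzre : z.re ≤ 1 := (re_le_norm z).trans hz
  rcases eq_or_ne z 1 with rfl | hz1
  · simpa [Vc_one, ← Nat.cast_succ, -Nat.cast_add, Complex.norm_natCast]
      using inv_add_one_le_two_div_sqrt_pi_mul hn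
  rw [one_div]
  refine norm_Vc_sub_le (by simp) (re_cpow_inv_two_pos (sub_ne_zero.2 hz1.symm) ?_) hzre hn
  simpa using hzre

theorem stmt18 :
    (∀ n : ℕ, 1 ≤ n → ∀ z : ℂ, ‖z‖ ≤ 1 →
      ‖Vc z n - (1 - z) ^ ((1 : ℂ) / 2)‖ ≤
        2 / Real.sqrt (Real.pi * n) * ‖z‖ ^ (n + 1)) ∧
    TendstoUniformlyOn (fun n z => Vc z n) (fun z => (1 - z) ^ ((1 : ℂ) / 2))
      Filter.atTop (Metric.closedBall 0 1) := by
  refine ⟨fun n hn z hz => norm_Vc_sub_cpow_le hn hz,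
    Metric.tendstoUniformlyOn_iff.2 fun ε hε => ?_⟩
  have hlim : Tendsto (fun n : ℕ => 2 / √(Real.pi * n)) atTop (𝓝 0) :=
    tendsto_const_nhds.div_atTop <| Real.tendsto_sqrt_atTop.comp <|
      tendsto_natCast_atTop_atTop.const_mul_atTop Real.pi_pos
  filter_upwards [hlim.eventually (gt_mem_nhds hε), eventually_ge_atTop 1] with n hnε hn z hz
  rw [mem_closedBall_zero_iff] at hz
  rw [dist_comm, dist_eq_norm]
  calc _ ≤ 2 / √(Real.pi * n) * ‖z‖ ^ (n + 1) := norm_Vc_sub_cpow_le hn hz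
    _ ≤ 2 / √(Real.pi * n) :=
      mul_le_of_le_one_right (by positivity) (pow_le_one₀ (norm_nonneg z) hz)
    _ < ε := hnε
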